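/- arXiv:1305.0492 — 2 statements merged into one kernel-verified Lean document; each statement's English description precedes it below -/
import Mathlib

section
/- Let d ≥ 2, let m be a positive integer and let r > 0. Set c = 1/(2 α_d (r + 3√d/(2m))^d m^d). Then for every finite set S ⊆ (1/m)ℤ^d there exists a subset S' ⊆ S with |S'| ≥ c·|S| such that for every pair of distinct points z, z' ∈ S' one has dist(Q_z, Q_{z'}) ≥ r. -/
/-!
Choose greedily a maximal subset `S'` of `S` whose points are pairwise at distance at least
`R = r + √d / m`. Since the cubes have Euclidean radius `√d / (2m)`, cubes around distinct points
of `S'` are at distance at least `r`. By maximality, every point of `S` lies within `R` of `S'`.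
The disjoint open cubes of volume `m⁻ᵈ` around the lattice points within `R` of a fixed point all
lie in a ball of radius `R + √d / (2m)`, so there are at most `α_d (R + √d / (2m))ᵈ mᵈ` such
points. Hence `|S| ≤ |S'| / (2c)`.
-/

open MeasureTheory Metric WithLp Finset

theorem Finset.exists_separated_subset_covering {E : Type*} [PseudoMetricSpace E] (S : Finset E)
    {R : ℝ} (hR : 0 ≤ R) :
    ∃ S' ⊆ S, (S' : Set E).Pairwise (fun z z' => R ≤ dist z z') ∧
      ∀ w ∈ S, ∃ z ∈ S', dist w z ≤ R := by
  classical
  obtain ⟨S', hmax⟩ := (S.powerset.filter fun T : Finset E =>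
    (T : Set E).Pairwise fun z z' => R ≤ dist z z').exists_maximal ⟨∅, by simp⟩
  simp only [mem_filter, mem_powerset] at hmax
  obtain ⟨⟨hS'S, hsep⟩, hmax⟩ := hmax
  refine ⟨S', hS'S, hsep, fun w hw => ?_⟩
  by_contra! hfar
  have hwS' : w ∉ S' := fun h => (hfar w h).not_ge (by simpa using hR)
  have hins : (insert w S' : Set E).Pairwise fun z z' => R ≤ dist z z' :=
    Set.pairwise_insert.2 ⟨hsep, fun z hz _ => ⟨(hfar z hz).le, dist_comm z w ▸ (hfar z hz).le⟩⟩
  exact hwS' (hmax ⟨insert_subset hw hS'S, by simpa using hins⟩ (subset_insert w S')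
    (mem_insert_self w S'))

theorem MeasureTheory.card_mul_le_measure_of_pairwiseDisjoint {α ι : Type*} [MeasurableSpace α]
    {μ : Measure α} {s : Finset ι} {A : ι → Set α} {B : Set α} {v : ENNReal}
    (hd : (s : Set ι).PairwiseDisjoint A) (hA : ∀ i ∈ s, MeasurableSet (A i))
    (hv : ∀ i ∈ s, μ (A i) = v) (hB : ∀ i ∈ s, A i ⊆ B) :
    #s * v ≤ μ B :=
  calc #s * v = ∑ i ∈ s, μ (A i) := by rw [sum_congr rfl hv, sum_const, nsmul_eq_mul]
    _ = μ (⋃ i ∈ s, A i) := (measure_biUnion_finset hd hA).symm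
    _ ≤ μ B := measure_mono (Set.iUnion₂_subset hB)

variable {ι : Type*} [Fintype ι]

theorem EuclideanSpace.dist_le_sqrt_card_mul_dist_ofLp (x y : EuclideanSpace ℝ ι) :
    dist x y ≤ √(Fintype.card ι) * dist (ofLp x) (ofLp y) := by
  rw [EuclideanSpace.dist_eq, ← Real.sqrt_sq dist_nonneg, ← Real.sqrt_mul (Nat.cast_nonneg _)]
  refine Real.sqrt_le_sqrt ?_
  calc ∑ i, dist (x i) (y i) ^ 2 ≤ ∑ _i : ι, dist (ofLp x) (ofLp y) ^ 2 :=
        sum_le_sum fun i _ => pow_le_pow_left₀ dist_nonneg (dist_le_pi_dist _ _ i) 2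
    _ = _ := by simp

theorem EuclideanSpace.dist_le_sqrt_card_mul_of_iSup_abs_sub_le {x z : EuclideanSpace ℝ ι} {δ : ℝ}
    (hδ : 0 ≤ δ) (h : (⨆ i, |x i - z i|) ≤ δ) : dist x z ≤ √(Fintype.card ι) * δ := by
  have hsup : dist (ofLp x) (ofLp z) ≤ δ := (dist_pi_le_iff hδ).2 fun i =>
    (Real.dist_eq _ _).trans_le ((le_ciSup (Set.finite_range _).bddAbove i).trans h)
  exact (dist_le_sqrt_card_mul_dist_ofLp x z).trans (by gcongr)

theorem EuclideanSpace.le_dist_of_iSup_abs_sub_le {x y z z' : EuclideanSpace ℝ ι} {r δ : ℝ}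
    (hδ : 0 ≤ δ) (hzz' : r + 2 * √(Fintype.card ι) * δ ≤ dist z z')
    (hx : (⨆ i, |x i - z i|) ≤ δ) (hy : (⨆ i, |y i - z' i|) ≤ δ) : r ≤ dist x y := by
  have hxz := dist_le_sqrt_card_mul_of_iSup_abs_sub_le hδ hx
  have hyz' := dist_le_sqrt_card_mul_of_iSup_abs_sub_le hδ hy
  linarith [dist_triangle4 z x y z', dist_comm x z]

def scaledLattice (ι : Type*) (m : ℕ) : Set (EuclideanSpace ℝ ι) :=
  {z | ∀ i, ∃ k : ℤ, z i = k / m}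

theorem inv_le_dist_ofLp_of_mem_scaledLattice {m : ℕ} {z z' : EuclideanSpace ℝ ι}
    (hz : z ∈ scaledLattice ι m) (hz' : z' ∈ scaledLattice ι m) (hne : z ≠ z') :
    (m : ℝ)⁻¹ ≤ dist (ofLp z) (ofLp z') := by
  obtain ⟨i, hi⟩ : ∃ i, z i ≠ z' i := by
    by_contra! h
    exact hne (PiLp.ext h)
  obtain ⟨k, hk⟩ := hz i
  obtain ⟨k', hk'⟩ := hz' i
  have hkk' : (1 : ℝ) ≤ |(k : ℝ) - k'| := by
    have : k ≠ k' := by rintro rfl; exact hi (hk.trans hk'.symm)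
    exact_mod_cast Int.one_le_abs (sub_ne_zero.2 this)
  calc (m : ℝ)⁻¹ ≤ |(k : ℝ) - k'| / m := by
        rw [inv_eq_one_div]; gcongr
    _ = dist (z i) (z' i) := by
        rw [Real.dist_eq, hk, hk', ← sub_div, abs_div, Nat.abs_cast]
    _ ≤ dist (ofLp z) (ofLp z') := dist_le_pi_dist _ _ i

theorem card_mul_le_volume_closedBall_of_subset_scaledLattice {m : ℕ} (hm : 0 < m)
    {S : Finset (EuclideanSpace ℝ ι)} (hS : (S : Set _) ⊆ scaledLattice ι m)
    {w : EuclideanSpace ℝ ι} {R : ℝ} (hSw : (S : Set _) ⊆ closedBall w R) :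
    #S * ENNReal.ofReal ((m : ℝ)⁻¹ ^ Fintype.card ι) ≤
      volume (closedBall w (R + √(Fintype.card ι) / (2 * m))) := by
  set δ : ℝ := (2 * m)⁻¹
  have hδ : 0 < δ := by positivity
  have h2δ : (m : ℝ)⁻¹ = 2 * δ := by simp only [δ]; field_simp
  -- `ofLp` carries the sup-norm, so these are the open cubes `Q_z`
  let cube (z : EuclideanSpace ℝ ι) : Set (EuclideanSpace ℝ ι) := ofLp ⁻¹' ball (ofLp z) δ
  refine card_mul_le_measure_of_pairwiseDisjoint (A := cube) ?_ ?_ ?_ ?_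
  · intro z hz z' hz' hne
    refine (ball_disjoint_ball ?_).preimage ofLp
    rw [← two_mul, ← h2δ]
    exact inv_le_dist_ofLp_of_mem_scaledLattice (hS hz) (hS hz') hne
  · exact fun z _ => measurableSet_ball.preimage (PiLp.continuous_ofLp 2 _).measurable
  · intro z _
    rw [(PiLp.volume_preserving_ofLp ι).measure_preimage measurableSet_ball.nullMeasurableSet, h2δ]
    exact Real.volume_pi_ball _ hδ
  · intro z hz x hx
    rw [Set.mem_preimage, mem_ball] at hx
    rw [mem_closedBall]
    calc dist x w ≤ dist x z + dist z w := dist_triangle x z w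
      _ ≤ √(Fintype.card ι) * δ + R := add_le_add
          ((EuclideanSpace.dist_le_sqrt_card_mul_dist_ofLp x z).trans (by gcongr)) (hSw hz)
      _ = R + √(Fintype.card ι) / (2 * m) := by simp only [δ]; ring

theorem card_le_of_subset_closedBall_of_subset_scaledLattice {m : ℕ} (hm : 0 < m)
    {S : Finset (EuclideanSpace ℝ ι)} (hS : (S : Set _) ⊆ scaledLattice ι m)
    {w : EuclideanSpace ℝ ι} {R : ℝ} (hR : 0 ≤ R) (hSw : (S : Set _) ⊆ closedBall w R) :
    (#S : ℝ) ≤ (volume (ball (0 : EuclideanSpace ℝ ι) 1)).toReal *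
      (R + √(Fintype.card ι) / (2 * m)) ^ Fintype.card ι * (m : ℝ) ^ Fintype.card ι := by
  have hpack := card_mul_le_volume_closedBall_of_subset_scaledLattice hm hS hSw
  rw [Measure.addHaar_closedBall _ w (by positivity), finrank_euclideanSpace] at hpack
  have := ENNReal.toReal_mono (by finiteness) hpack
  rw [ENNReal.toReal_mul, ENNReal.toReal_mul, ENNReal.toReal_natCast,
    ENNReal.toReal_ofReal (by positivity), ENNReal.toReal_ofReal (by positivity)] at this
  rwa [inv_pow, ← div_eq_mul_inv, div_le_iff₀ (by positivity), mul_comm (_ ^ _)] at this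

theorem card_le_card_mul_of_subset_scaledLattice {m : ℕ} (hm : 0 < m)
    {S S' : Finset (EuclideanSpace ℝ ι)} (hS : (S : Set _) ⊆ scaledLattice ι m) {R : ℝ}
    (hR : 0 ≤ R) (hcov : ∀ w ∈ S, ∃ z ∈ S', dist w z ≤ R) :
    (#S : ℝ) ≤ #S' * ((volume (ball (0 : EuclideanSpace ℝ ι) 1)).toReal *
      (R + √(Fintype.card ι) / (2 * m)) ^ Fintype.card ι * (m : ℝ) ^ Fintype.card ι) := by
  classical
  simpa using card_nsmul_le_card_nsmul (R := ℝ) (fun w z => dist w z ≤ R) (m := 1)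
    (fun w hw => by
      obtain ⟨z, hz, hwz⟩ := hcov w hw
      exact_mod_cast card_pos.2 ⟨z, (mem_bipartiteAbove _).2 ⟨hz, hwz⟩⟩)
    (fun z _ => card_le_of_subset_closedBall_of_subset_scaledLattice hm
      (fun w hw => hS (mem_filter.1 hw).1) hR (fun w hw => (mem_filter.1 hw).2))

theorem stmt_0_general (d m : ℕ) (hm : 0 < m) (r : ℝ) (hr : 0 < r)
    (αd c : ℝ)
    (hα : αd = (MeasureTheory.volume
      (Metric.ball (0 : EuclideanSpace ℝ (Fin d)) 1)).toReal)
    (hc : c = 1 / (2 * αd * (r + 3 * Real.sqrt d / (2 * m)) ^ d * (m : ℝ) ^ d))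
    (S : Finset (EuclideanSpace ℝ (Fin d)))
    (hS : ∀ z ∈ S, ∀ i, ∃ k : ℤ, z i = (k : ℝ) / m) :
    ∃ S' ⊆ S, c * (S.card : ℝ) ≤ (S'.card : ℝ) ∧
      ∀ z ∈ S', ∀ z' ∈ S', z ≠ z' →
        ∀ x y : EuclideanSpace ℝ (Fin d),
          (⨆ i, |x i - z i|) ≤ 1 / (2 * m) →
          (⨆ i, |y i - z' i|) ≤ 1 / (2 * m) →
          r ≤ dist x y := by
  set R := r + 2 * √d * (1 / (2 * m))
  obtain ⟨S', hS'S, hsep, hcov⟩ := S.exists_separated_subset_covering (R := R) (by positivity)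
  have hcard := card_le_card_mul_of_subset_scaledLattice hm hS (by positivity) hcov
  rw [Fintype.card_fin, ← hα, show R + √d / (2 * m) = r + 3 * √d / (2 * m) by ring] at hcard
  have hαd : 0 < αd :=
    hα ▸ ENNReal.toReal_pos (measure_ball_pos _ _ one_pos).ne' measure_ball_lt_top.ne
  refine ⟨S', hS'S, ?_, fun z hz z' hz' hne x y hx hy => ?_⟩
  · have hc0 : 0 ≤ c := by rw [hc]; positivity
    calc c * #S ≤ c * (#S' * (αd * (r + 3 * √d / (2 * m)) ^ d * (m : ℝ) ^ d)) := by gcongr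
      _ = #S' / 2 := by rw [hc]; field_simp
      _ ≤ #S' := half_le_self (Nat.cast_nonneg _)
  · exact EuclideanSpace.le_dist_of_iSup_abs_sub_le (by positivity)
      (by rw [Fintype.card_fin]; exact hsep hz hz' hne) hx hy

/-- For every finite set `S ⊆ (1/m)ℤ^d` there is a subset `S' ⊆ S`
with `|S'| ≥ c·|S|`, where `c = 1/(2 α_d (r + 3√d/(2m))^d m^d)`, such that any two
distinct cubes `Q_z, Q_{z'}` with `z, z' ∈ S'` are at Euclidean distance at least `r`
(i.e. every point of `Q_z` is at distance ≥ r from every point of `Q_{z'}`). -/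
theorem stmt_0 (d m : ℕ) (hd : 2 ≤ d) (hm : 0 < m) (r : ℝ) (hr : 0 < r)
    (αd c : ℝ)
    (hα : αd = (MeasureTheory.volume
      (Metric.ball (0 : EuclideanSpace ℝ (Fin d)) 1)).toReal)
    (hc : c = 1 / (2 * αd * (r + 3 * Real.sqrt d / (2 * m)) ^ d * (m : ℝ) ^ d))
    (S : Finset (EuclideanSpace ℝ (Fin d)))
    (hS : ∀ z ∈ S, ∀ i, ∃ k : ℤ, z i = (k : ℝ) / m) :
    ∃ S' ⊆ S, c * (S.card : ℝ) ≤ (S'.card : ℝ) ∧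
      ∀ z ∈ S', ∀ z' ∈ S', z ≠ z' →
        ∀ x y : EuclideanSpace ℝ (Fin d),
          (⨆ i, |x i - z i|) ≤ 1 / (2 * m) →
          (⨆ i, |y i - z' i|) ≤ 1 / (2 * m) →
          r ≤ dist x y :=
  stmt_0_general d m hm r hr αd c hα hc S hS
end

section
/- Let d ≥ 2, let 0 < r < r_max < ∞ and let 0 < δ̃ ≤ 1. Let φ : ℝ^d × ℝ^d → [0, ∞) satisfy: φ(x, y) ≥ δ̃ whenever r ≤ ‖x − y‖ < r_max, and φ(x, y) ≥ 1 whenever ‖x − y‖ ≥ r_max. Let x ∈ ℝ^d and let ξ ⊆ ℝ^d be a finite set such that ‖y − y'‖ ≥ r for all distinct y, y' ∈ ξ and ‖x − y‖ ≥ r for all y ∈ ξ. Then ∏_{y ∈ ξ} φ(x, y) ≥ δ̃^M, where M = ((2·r_max + r)/r)^d and δ̃^M denotes the real power. -/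
/-!
Points of `ξ` at distance `≥ r_max` from `x` contribute a factor `≥ 1`, and the others a factor
`≥ δ̃`, so the product is at least `δ̃ ^ N`, where `N` counts the points of `ξ` within `r_max` of `x`.
These points are `r`-separated, so the balls of radius `r / 2` around them are disjoint and lie in
the ball of radius `r_max + r / 2` around `x`; comparing volumes gives
`N ≤ ((r_max + r/2) / (r/2)) ^ d = ((2 r_max + r) / r) ^ d`, and `δ̃ ≤ 1` turns this into the bound.
-/

open MeasureTheory Metric Finset

section Packing

variable {E : Type*} [NormedAddCommGroup E] [NormedSpace ℝ E] [FiniteDimensional ℝ E]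
  [MeasurableSpace E] [BorelSpace E]

lemma card_mul_pow_le_of_pairwise_le_dist (μ : Measure E) [μ.IsAddHaarMeasure] {r R : ℝ}
    (hr : 0 < r) (hR : 0 ≤ R) (x : E) (S : Finset E)
    (hsep : (S : Set E).Pairwise fun y y' => r ≤ dist y y') (hS : ∀ y ∈ S, dist x y ≤ R) :
    (#S : ℝ) * (r / 2) ^ Module.finrank ℝ E ≤ (R + r / 2) ^ Module.finrank ℝ E := by
  have hdisj : (S : Set E).PairwiseDisjoint fun y => ball y (r / 2) := fun y hy y' hy' hne =>
    ball_disjoint_ball (by linarith [hsep hy hy' hne])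
  have hsub : (⋃ y ∈ S, ball y (r / 2)) ⊆ ball x (R + r / 2) := by
    simp only [Set.iUnion_subset_iff]
    intro y hy z hz
    rw [mem_ball] at hz ⊢
    linarith [dist_triangle z y x, dist_comm y x, hS y hy]
  have hvol : (#S : ENNReal) * μ (ball (0 : E) (r / 2)) ≤ μ (ball x (R + r / 2)) := by
    calc (#S : ENNReal) * μ (ball (0 : E) (r / 2))
        = ∑ y ∈ S, μ (ball y (r / 2)) := by
          simp [Measure.addHaar_ball_center, sum_const, nsmul_eq_mul]
      _ = μ (⋃ y ∈ S, ball y (r / 2)) :=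
          (measure_biUnion_finset hdisj fun _ _ => measurableSet_ball).symm
      _ ≤ μ (ball x (R + r / 2)) := measure_mono hsub
  rw [Measure.addHaar_ball_of_pos μ 0 (half_pos hr), Measure.addHaar_ball_of_pos μ x (by linarith),
    ← mul_assoc, ENNReal.mul_le_mul_iff_left (measure_ball_pos μ _ one_pos).ne'
      measure_ball_lt_top.ne, ← ENNReal.ofReal_natCast, ← ENNReal.ofReal_mul (by positivity),
    ENNReal.ofReal_le_ofReal_iff (by positivity)] at hvol
  exact hvol

lemma card_le_of_pairwise_le_dist (μ : Measure E) [μ.IsAddHaarMeasure] {r R : ℝ}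
    (hr : 0 < r) (hR : 0 ≤ R) (x : E) (S : Finset E)
    (hsep : (S : Set E).Pairwise fun y y' => r ≤ dist y y') (hS : ∀ y ∈ S, dist x y ≤ R) :
    (#S : ℝ) ≤ ((2 * R + r) / r) ^ Module.finrank ℝ E := by
  rw [show (2 * R + r) / r = (R + r / 2) / (r / 2) by field_simp, div_pow,
    le_div_iff₀ (by positivity)]
  exact card_mul_pow_le_of_pairwise_le_dist μ hr hR x S hsep hS

end Packing

lemma pow_card_filter_le_prod {ι R : Type*} [CommSemiring R] [PartialOrder R] [IsOrderedRing R]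
    (s : Finset ι) (p : ι → Prop) [DecidablePred p] (f : ι → R) {δ : R} (hδ : 0 ≤ δ)
    (hp : ∀ i ∈ s, p i → δ ≤ f i) (hnp : ∀ i ∈ s, ¬ p i → 1 ≤ f i) :
    δ ^ #(s.filter p) ≤ ∏ i ∈ s, f i := by
  have hpow : δ ^ #(s.filter p) ≤ ∏ i ∈ s with p i, f i := by
    rw [← prod_const]
    exact prod_le_prod (fun _ _ => hδ) fun i hi => hp i (mem_filter.1 hi).1 (mem_filter.1 hi).2
  rw [← prod_filter_mul_prod_filter_not s p, ← mul_one (δ ^ _)]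
  exact mul_le_mul hpow (one_le_prod fun i hi => hnp i (mem_filter.1 hi).1 (mem_filter.1 hi).2)
    zero_le_one ((pow_nonneg hδ _).trans hpow)

theorem stmt_11_general (d : ℕ) (r rmax : ℝ) (hr : 0 < r) (hrrmax : r < rmax)
    (δ : ℝ) (hδ0 : 0 < δ) (hδ1 : δ ≤ 1)
    (φ : EuclideanSpace ℝ (Fin d) × EuclideanSpace ℝ (Fin d) → ℝ)
    (hφδ : ∀ x y : EuclideanSpace ℝ (Fin d),
      r ≤ dist x y → dist x y < rmax → δ ≤ φ (x, y))
    (hφ1 : ∀ x y : EuclideanSpace ℝ (Fin d), rmax ≤ dist x y → 1 ≤ φ (x, y))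
    (x : EuclideanSpace ℝ (Fin d)) (ξ : Finset (EuclideanSpace ℝ (Fin d)))
    (hsep : ∀ y ∈ ξ, ∀ y' ∈ ξ, y ≠ y' → r ≤ dist y y')
    (hx : ∀ y ∈ ξ, r ≤ dist x y) :
    δ ^ (((2 * rmax + r) / r) ^ d) ≤ ∏ y ∈ ξ, φ (x, y) := by
  classical
  set near := ξ.filter fun y => dist x y < rmax
  have hcard : (#near : ℝ) ≤ ((2 * rmax + r) / r) ^ d := by
    simpa using card_le_of_pairwise_le_dist volume hr (by linarith) x near
      (fun y hy y' hy' hne => hsep y (mem_filter.1 hy).1 y' (mem_filter.1 hy').1 hne)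
      (fun y hy => (mem_filter.1 hy).2.le)
  calc δ ^ (((2 * rmax + r) / r) ^ d) ≤ δ ^ #near := by
        rw [← Real.rpow_natCast δ #near]
        exact Real.rpow_le_rpow_of_exponent_ge hδ0 hδ1 hcard
    _ ≤ ∏ y ∈ ξ, φ (x, y) :=
        pow_card_filter_le_prod ξ _ _ hδ0.le (fun y hy h => hφδ x y (hx y hy) h)
          (fun y _ h => hφ1 x y (not_lt.1 h))

/-- Hard-core pairwise interaction bound. If `φ ≥ δ̃` on the annulus
`r ≤ ‖x − y‖ < r_max` and `φ ≥ 1` for `‖x − y‖ ≥ r_max`, then for any finite set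
`ξ` whose points are pairwise `r`-separated and all at distance `≥ r` from `x`,
`∏_{y ∈ ξ} φ(x, y) ≥ δ̃^M` with `M = ((2 r_max + r)/r)^d` (real power). -/
theorem stmt_11 (d : ℕ) (hd : 2 ≤ d) (r rmax : ℝ) (hr : 0 < r) (hrrmax : r < rmax)
    (δ : ℝ) (hδ0 : 0 < δ) (hδ1 : δ ≤ 1)
    (φ : EuclideanSpace ℝ (Fin d) × EuclideanSpace ℝ (Fin d) → ℝ)
    (hφ0 : ∀ p, 0 ≤ φ p)
    (hφδ : ∀ x y : EuclideanSpace ℝ (Fin d),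
      r ≤ dist x y → dist x y < rmax → δ ≤ φ (x, y))
    (hφ1 : ∀ x y : EuclideanSpace ℝ (Fin d), rmax ≤ dist x y → 1 ≤ φ (x, y))
    (x : EuclideanSpace ℝ (Fin d)) (ξ : Finset (EuclideanSpace ℝ (Fin d)))
    (hsep : ∀ y ∈ ξ, ∀ y' ∈ ξ, y ≠ y' → r ≤ dist y y')
    (hx : ∀ y ∈ ξ, r ≤ dist x y) :
    δ ^ (((2 * rmax + r) / r) ^ d) ≤ ∏ y ∈ ξ, φ (x, y) :=
  stmt_11_general d r rmax hr hrrmax δ hδ0 hδ1 φ hφδ hφ1 x ξ hsep hx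
end
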